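/- arXiv:1705.02931 — 5 statements merged into one kernel-verified Lean document; each statement's English description precedes it below -/
import Mathlib

section
/- Let F be a field, and let P_i, Q_i, P_j, Q_j be homogeneous polynomials in F[u,v] with gcd(P_i, Q_i) = 1 and gcd(P_j, Q_j) = 1. For roots of unity α ≠ α' and β ≠ β' in F, the polynomials G = gcd(P_i - α P_j, Q_i - β Q_j) and G' = gcd(P_i - α' P_j, Q_i - β' Q_j) are coprime. -/
open MvPolynomial

/-- If `gcd(P_i,Q_i) = 1`, `gcd(P_j,Q_j) = 1`, and `α ≠ α'`, `β ≠ β'` are roots of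
unity, then `G = gcd(P_i - α P_j, Q_i - β Q_j)` and `G' = gcd(P_i - α' P_j, Q_i - β' Q_j)`
are coprime. -/
theorem stmt_3 {F : Type*} [Field F]
    (Pi Qi Pj Qj G G' : MvPolynomial (Fin 2) F)
    (dPi dQi dPj dQj : ℕ)
    (hPi : Pi.IsHomogeneous dPi) (hQi : Qi.IsHomogeneous dQi)
    (hPj : Pj.IsHomogeneous dPj) (hQj : Qj.IsHomogeneous dQj)
    (hcopi : ∀ d, d ∣ Pi → d ∣ Qi → IsUnit d)
    (hcopj : ∀ d, d ∣ Pj → d ∣ Qj → IsUnit d)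
    (α α' β β' : F)
    (hα : ∃ n, 0 < n ∧ α ^ n = 1) (hα' : ∃ n, 0 < n ∧ α' ^ n = 1)
    (hβ : ∃ n, 0 < n ∧ β ^ n = 1) (hβ' : ∃ n, 0 < n ∧ β' ^ n = 1)
    (hαα : α ≠ α') (hββ : β ≠ β')
    -- G is the gcd of `P_i - α P_j` and `Q_i - β Q_j`
    (hG1 : G ∣ Pi - C α * Pj) (hG2 : G ∣ Qi - C β * Qj)
    (hGmax : ∀ d, d ∣ Pi - C α * Pj → d ∣ Qi - C β * Qj → d ∣ G)
    -- G' is the gcd of `P_i - α' P_j` and `Q_i - β' Q_j`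
    (hG'1 : G' ∣ Pi - C α' * Pj) (hG'2 : G' ∣ Qi - C β' * Qj)
    (hG'max : ∀ d, d ∣ Pi - C α' * Pj → d ∣ Qi - C β' * Qj → d ∣ G') :
    ∀ d, d ∣ G → d ∣ G' → IsUnit d := by
  intro d hdG hdG'
  have h1 := hdG.trans hG1
  have h2 := hdG.trans hG2
  have h3 := hdG'.trans hG'1
  have h4 := hdG'.trans hG'2
  have huα : IsUnit (C (α' - α) : MvPolynomial (Fin 2) F) :=
    (isUnit_iff_ne_zero.mpr (sub_ne_zero.mpr (Ne.symm hαα))).map C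
  have huβ : IsUnit (C (β' - β) : MvPolynomial (Fin 2) F) :=
    (isUnit_iff_ne_zero.mpr (sub_ne_zero.mpr (Ne.symm hββ))).map C
  have hPjd : d ∣ Pj := by
    have h : d ∣ C (α' - α) * Pj := by
      have := dvd_sub h1 h3
      have e : (Pi - C α * Pj) - (Pi - C α' * Pj) = C (α' - α) * Pj := by
        rw [map_sub]; ring
      rwa [e] at this
    exact huα.dvd_mul_left.mp h
  have hQjd : d ∣ Qj := by
    have h : d ∣ C (β' - β) * Qj := by
      have := dvd_sub h2 h4
      have e : (Qi - C β * Qj) - (Qi - C β' * Qj) = C (β' - β) * Qj := by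
        rw [map_sub]; ring
      rwa [e] at this
    exact huβ.dvd_mul_left.mp h
  exact hcopj d hPjd hQjd
end

section
/- Let F be an algebraically closed field containing a primitive 3rd root of unity ζ, and let P_1, Q_1, P_2, Q_2 ∈ F[u,v] be homogeneous of degree 2 with gcd(P_i, Q_i) = 1 and P_1^3 - Q_1^3 = P_2^3 - Q_2^3. Set G^{l,r} = gcd(P_1 - ζ^l P_2, Q_1 - ζ^r Q_2) and M^{l,r} = deg G^{l,r} for 0 ≤ l, r ≤ 2. Then every row sum and every column sum of the 3×3 matrix (M^{l,r}) equals 2. -/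
/-!
Write `A_l = P₁ - ζ^l P₂` and `B_r = Q₁ - ζ^r Q₂`, so that
`∏ A_l = P₁³ - P₂³ = Q₁³ - Q₂³ = ∏ B_r`, and fix `l`. The gcds `G l r` are pairwise coprime in `r`:
a common prime factor `p` divides two of the `B_r`, hence `Q₁` and `Q₂`, hence `p³ ∣ ∏ A_i`;
since `p ∤ P₂` it divides no `A_i` with `i ≠ l`, so `p³ ∣ A_l`, impossible as `deg A_l = 2`.
Hence `∏_r G l r ∣ A_l`. Conversely `A_l ∣ ∏ B_r` splits `A_l` into divisors of the `B_r`, each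
dividing the corresponding gcd, so `A_l ∣ ∏_r G l r` and the degrees of the `G l r` add up to
`deg A_l = 2`. Columns follow by exchanging `P` and `Q`.
-/

open MvPolynomial Finset Function

theorem dvd_and_dvd_of_dvd_sub_mul_of_dvd_sub_mul {R : Type*} [CommRing R] {a b x y d : R}
    (hab : IsUnit (a - b)) (ha : d ∣ x - a * y) (hb : d ∣ x - b * y) : d ∣ x ∧ d ∣ y := by
  have hy : d ∣ y := hab.dvd_mul_left.mp (by simpa [sub_mul] using dvd_sub hb ha)
  exact ⟨by simpa using dvd_add ha (hy.mul_left a), hy⟩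

theorem Prime.pow_dvd_of_dvd_prod {ι M : Type*} [CommMonoidWithZero M] [IsCancelMulZero M]
    [DecidableEq ι] {p : M} (hp : Prime p) {s : Finset ι} {f : ι → M} {i : ι} (hi : i ∈ s)
    {m : ℕ} (h : p ^ m ∣ ∏ j ∈ s, f j) (hj : ∀ j ∈ s, j ≠ i → ¬ p ∣ f j) : p ^ m ∣ f i := by
  rw [← mul_prod_erase s f hi] at h
  refine hp.pow_dvd_of_dvd_mul_right m (fun hdvd => ?_) h
  obtain ⟨j, hj', hpj⟩ := (hp.dvd_finsetProd_iff _).mp hdvd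
  exact hj j (mem_of_mem_erase hj') (ne_of_mem_erase hj') hpj

theorem Finset.dvd_prod_of_dvd_prod_of_forall_dvd {ι α : Type*} [CommMonoidWithZero α]
    [DecompositionMonoid α] {s : Finset ι} {a : α} {b g : ι → α} (h : a ∣ ∏ i ∈ s, b i)
    (hg : ∀ i ∈ s, ∀ d, d ∣ a → d ∣ b i → d ∣ g i) : a ∣ ∏ i ∈ s, g i := by
  classical
  induction s using Finset.induction_on generalizing a with
  | empty => simpa using h
  | insert i s hi ih =>
    rw [prod_insert hi] at h ⊢
    obtain ⟨a₁, a₂, h₁, h₂, rfl⟩ := exists_dvd_and_dvd_of_dvd_mul h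
    refine mul_dvd_mul (hg i (mem_insert_self i s) a₁ (dvd_mul_right a₁ a₂) h₁) (ih h₂ ?_)
    exact fun j hj d hda hdb => hg j (mem_insert_of_mem hj) d (hda.mul_left a₁) hdb

theorem IsPrimitiveRoot.prod_sub_pow_mul {R : Type*} [CommRing R] [IsDomain R] {ζ : R} {n : ℕ}
    [NeZero n] (hζ : IsPrimitiveRoot ζ n) (x y : R) :
    ∏ i : Fin n, (x - ζ ^ (i : ℕ) * y) = x ^ n - y ^ n := by
  have hn := NeZero.pos n
  rw [hζ.pow_sub_pow_eq_prod_sub_mul x y hn]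
  refine prod_bij (fun i _ => ζ ^ (i : ℕ)) (fun i _ => ?_) (fun i _ j _ h => ?_)
    (fun μ hμ => ?_) (fun _ _ => rfl)
  · rw [Polynomial.mem_nthRootsFinset hn, ← pow_mul, mul_comm, pow_mul, hζ.pow_eq_one, one_pow]
  · exact Fin.ext (hζ.pow_inj i.isLt j.isLt h)
  · obtain ⟨i, hi, rfl⟩ :=
      hζ.eq_pow_of_pow_eq_one ((Polynomial.mem_nthRootsFinset hn 1).mp hμ)
    exact ⟨⟨i, hi⟩, mem_univ _, rfl⟩

namespace MvPolynomial

section IsDomain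

variable {σ R : Type*} [CommRing R] [IsDomain R]

theorem totalDegree_pow_of_isDomain {p : MvPolynomial σ R} (hp : p ≠ 0) (m : ℕ) :
    (p ^ m).totalDegree = m * p.totalDegree := by
  induction m with
  | zero => simp
  | succ m ih =>
    rw [pow_succ, totalDegree_mul_of_isDomain (pow_ne_zero m hp) hp, ih, Nat.succ_mul]

theorem totalDegree_prod_of_isDomain {ι : Type*} {s : Finset ι} {f : ι → MvPolynomial σ R}
    (hf : ∀ i ∈ s, f i ≠ 0) : (∏ i ∈ s, f i).totalDegree = ∑ i ∈ s, (f i).totalDegree := by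
  classical
  induction s using Finset.induction_on with
  | empty => simp
  | insert i s hi ih =>
    rw [prod_insert hi, sum_insert hi, totalDegree_mul_of_isDomain (hf i (mem_insert_self i s))
      (prod_ne_zero_iff.mpr fun j hj => hf j (mem_insert_of_mem hj)),
      ih fun j hj => hf j (mem_insert_of_mem hj)]

theorem _root_.Associated.totalDegree_eq {p q : MvPolynomial σ R} (h : Associated p q) :
    p.totalDegree = q.totalDegree := by
  obtain ⟨u, rfl⟩ := h
  rcases eq_or_ne p 0 with rfl | hp
  · simp
  rw [totalDegree_mul_of_isDomain hp u.ne_zero,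
    (isUnit_iff_totalDegree_of_isReduced.mp u.isUnit).2, add_zero]

end IsDomain

variable {σ K : Type*} [Field K]

theorem isUnit_of_totalDegree_eq_zero {p : MvPolynomial σ K} (hp : p ≠ 0)
    (h : p.totalDegree = 0) : IsUnit p := by
  refine isUnit_iff_totalDegree_of_isReduced.mpr ⟨isUnit_iff_ne_zero.mpr fun h0 => hp ?_, h⟩
  rw [totalDegree_eq_zero_iff_eq_C.mp h, h0, C_0]

variable {n k : ℕ} {ζ : K}

theorem _root_.IsPrimitiveRoot.isUnit_C_pow_sub_C_pow (hζ : IsPrimitiveRoot ζ n) {i j : Fin n}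
    (hij : i ≠ j) : IsUnit (C (ζ ^ (i : ℕ)) - C (ζ ^ (j : ℕ)) : MvPolynomial σ K) := by
  rw [← C_sub]
  exact (isUnit_iff_ne_zero.mpr (sub_ne_zero.mpr fun h => hij (Fin.ext
    (hζ.pow_inj i.isLt j.isLt h)))).map C

theorem _root_.IsPrimitiveRoot.prod_sub_C_pow_mul [NeZero n] (hζ : IsPrimitiveRoot ζ n)
    (X Y : MvPolynomial σ K) : ∏ i : Fin n, (X - C (ζ ^ (i : ℕ)) * Y) = X ^ n - Y ^ n := by
  simpa only [C_pow] using (hζ.map_of_injective (C_injective σ K)).prod_sub_pow_mul X Y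

variable [NeZero n] {P₁ P₂ Q₁ Q₂ : MvPolynomial σ K}

theorem not_prime_of_dvd_sub_C_pow_mul (hζ : IsPrimitiveRoot ζ n) (hk : k < n)
    (hP₁ : P₁.IsHomogeneous k) (hP₂ : P₂.IsHomogeneous k)
    (hcop : ∀ d, d ∣ P₂ → d ∣ Q₂ → IsUnit d) (heq : P₁ ^ n - P₂ ^ n = Q₁ ^ n - Q₂ ^ n)
    {l : Fin n} (hA : P₁ - C (ζ ^ (l : ℕ)) * P₂ ≠ 0) {p : MvPolynomial σ K}
    (hpA : p ∣ P₁ - C (ζ ^ (l : ℕ)) * P₂) (hpQ₁ : p ∣ Q₁) (hpQ₂ : p ∣ Q₂) : ¬ Prime p := by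
  intro hp
  have hprod : p ^ n ∣ ∏ i : Fin n, (P₁ - C (ζ ^ (i : ℕ)) * P₂) := by
    rw [hζ.prod_sub_C_pow_mul, heq, ← hζ.prod_sub_C_pow_mul, ← Fin.prod_const]
    exact prod_dvd_prod_of_dvd _ _ fun i _ => dvd_sub hpQ₁ (hpQ₂.mul_left _)
  have hp_not_dvd : ∀ i ∈ univ, i ≠ l → ¬ p ∣ P₁ - C (ζ ^ (i : ℕ)) * P₂ := fun i _ hil hpi =>
    hp.not_isUnit (hcop p
      (dvd_and_dvd_of_dvd_sub_mul_of_dvd_sub_mul (hζ.isUnit_C_pow_sub_C_pow hil) hpi hpA).2 hpQ₂)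
  have hdeg := totalDegree_le_of_dvd_of_isDomain (hp.pow_dvd_of_dvd_prod (mem_univ l) hprod hp_not_dvd) hA
  rw [totalDegree_pow_of_isDomain hp.ne_zero, (hP₁.sub (hP₂.C_mul _)).totalDegree hA] at hdeg
  have hp₀ : p.totalDegree = 0 := by nlinarith
  exact hp.not_isUnit (isUnit_of_totalDegree_eq_zero hp.ne_zero hp₀)


theorem sum_totalDegree_gcd_sub_C_pow_mul (hζ : IsPrimitiveRoot ζ n) (hk : k < n)
    (hP₁ : P₁.IsHomogeneous k) (hP₂ : P₂.IsHomogeneous k)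
    (hcop : ∀ d, d ∣ P₂ → d ∣ Q₂ → IsUnit d) (heq : P₁ ^ n - P₂ ^ n = Q₁ ^ n - Q₂ ^ n)
    {l : Fin n} (hA : P₁ - C (ζ ^ (l : ℕ)) * P₂ ≠ 0) (G : Fin n → MvPolynomial σ K)
    (hG₁ : ∀ r, G r ∣ P₁ - C (ζ ^ (l : ℕ)) * P₂) (hG₂ : ∀ r, G r ∣ Q₁ - C (ζ ^ (r : ℕ)) * Q₂)
    (hG : ∀ (r : Fin n) d, d ∣ P₁ - C (ζ ^ (l : ℕ)) * P₂ → d ∣ Q₁ - C (ζ ^ (r : ℕ)) * Q₂ →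
      d ∣ G r) :
    ∑ r, (G r).totalDegree = k := by
  have hG₀ : ∀ r, G r ≠ 0 := fun r h => hA (zero_dvd_iff.mp (h ▸ hG₁ r))
  have hrel : Pairwise (IsRelPrime on G) := fun r r' hrr' =>
    (UniqueFactorizationMonoid.isRelPrime_iff_no_prime_factors (hG₀ r)).mpr fun d hd hd' =>
      have hdQ := dvd_and_dvd_of_dvd_sub_mul_of_dvd_sub_mul (hζ.isUnit_C_pow_sub_C_pow hrr')
        (hd.trans (hG₂ r)) (hd'.trans (hG₂ r'))
      not_prime_of_dvd_sub_C_pow_mul hζ hk hP₁ hP₂ hcop heq hA (hd.trans (hG₁ r)) hdQ.1 hdQ.2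
  have hdvd_prod : P₁ - C (ζ ^ (l : ℕ)) * P₂ ∣ ∏ r : Fin n, (Q₁ - C (ζ ^ (r : ℕ)) * Q₂) := by
    rw [hζ.prod_sub_C_pow_mul, ← heq, ← hζ.prod_sub_C_pow_mul]
    exact dvd_prod_of_mem _ (mem_univ l)
  have hassoc : Associated (∏ r, G r) (P₁ - C (ζ ^ (l : ℕ)) * P₂) :=
    associated_of_dvd_dvd (Fintype.prod_dvd_of_isRelPrime hrel hG₁)
      (dvd_prod_of_dvd_prod_of_forall_dvd hdvd_prod fun r _ => hG r)
  rw [← totalDegree_prod_of_isDomain fun r _ => hG₀ r, hassoc.totalDegree_eq,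
    (hP₁.sub (hP₂.C_mul _)).totalDegree hA]

end MvPolynomial

open Fin.NatCast in
theorem stmt_4_general {F : Type*} [Field F]
    (ζ : F) (hζ : IsPrimitiveRoot ζ 3)
    (P₁ Q₁ P₂ Q₂ : MvPolynomial (Fin 2) F)
    (hP₁ : P₁.IsHomogeneous 2) (hQ₁ : Q₁.IsHomogeneous 2)
    (hP₂ : P₂.IsHomogeneous 2) (hQ₂ : Q₂.IsHomogeneous 2)
    (hcop2 : ∀ d, d ∣ P₂ → d ∣ Q₂ → IsUnit d)
    (heq : P₁ ^ 3 - Q₁ ^ 3 = P₂ ^ 3 - Q₂ ^ 3)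
    (hPne : ∀ l : Fin 3, P₁ ≠ C (ζ ^ (l : ℕ)) * P₂)
    (hQne : ∀ r : Fin 3, Q₁ ≠ C (ζ ^ (r : ℕ)) * Q₂)
    (G : Fin 3 → Fin 3 → MvPolynomial (Fin 2) F)
    -- `G l r` is the gcd of `P₁ - ζ^l P₂` and `Q₁ - ζ^r Q₂`
    (hG1 : ∀ l r, G l r ∣ P₁ - C (ζ ^ (l : ℕ)) * P₂)
    (hG2 : ∀ l r, G l r ∣ Q₁ - C (ζ ^ (r : ℕ)) * Q₂)
    (hGmax : ∀ l r d, d ∣ P₁ - C (ζ ^ (l : ℕ)) * P₂ → d ∣ Q₁ - C (ζ ^ (r : ℕ)) * Q₂ →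
      d ∣ G l r)
    (M : Fin 3 → Fin 3 → ℕ) (hM : ∀ l r, M l r = (G l r).totalDegree) :
    (∀ l, ∑ r, M l r = 2) ∧ (∀ r, ∑ l, M l r = 2) := by
  -- `hGmax` quantifies over natural-number indices, cast into `Fin 3`.
  have hG : ∀ (l r : Fin 3) d, d ∣ P₁ - C (ζ ^ (l : ℕ)) * P₂ → d ∣ Q₁ - C (ζ ^ (r : ℕ)) * Q₂ →
      d ∣ G l r := fun l r d h₁ h₂ => by simpa using hGmax l r d h₁ h₂
  have heqP : P₁ ^ 3 - P₂ ^ 3 = Q₁ ^ 3 - Q₂ ^ 3 := by linear_combination heq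
  simp only [hM]
  refine ⟨fun l => ?_, fun r => ?_⟩
  · exact sum_totalDegree_gcd_sub_C_pow_mul hζ (by norm_num) hP₁ hP₂ hcop2 heqP
      (sub_ne_zero.mpr (hPne l)) (G l) (hG1 l) (hG2 l) (hG l)
  · exact sum_totalDegree_gcd_sub_C_pow_mul hζ (by norm_num) hQ₁ hQ₂
      (fun d h₁ h₂ => hcop2 d h₂ h₁) heqP.symm (sub_ne_zero.mpr (hQne r)) (G · r)
      (hG2 · r) (hG1 · r) (fun l d h₁ h₂ => hG l r d h₂ h₁)

open Fin.NatCast in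
/-- For `(a,b,c)=(3,3,3)`, `k=2`: the matrix of degrees `M^{l,r} = deg gcd(P_1 - ζ^l P_2,
Q_1 - ζ^r Q_2)` has all row and column sums equal to `2`. -/
theorem stmt_4 {F : Type*} [Field F] [IsAlgClosed F]
    (ζ : F) (hζ : IsPrimitiveRoot ζ 3)
    (P₁ Q₁ P₂ Q₂ : MvPolynomial (Fin 2) F)
    (hP₁ : P₁.IsHomogeneous 2) (hQ₁ : Q₁.IsHomogeneous 2)
    (hP₂ : P₂.IsHomogeneous 2) (hQ₂ : Q₂.IsHomogeneous 2)
    (hcop1 : ∀ d, d ∣ P₁ → d ∣ Q₁ → IsUnit d)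
    (hcop2 : ∀ d, d ∣ P₂ → d ∣ Q₂ → IsUnit d)
    (heq : P₁ ^ 3 - Q₁ ^ 3 = P₂ ^ 3 - Q₂ ^ 3)
    (hPne : ∀ l : Fin 3, P₁ ≠ C (ζ ^ (l : ℕ)) * P₂)
    (hQne : ∀ r : Fin 3, Q₁ ≠ C (ζ ^ (r : ℕ)) * Q₂)
    (G : Fin 3 → Fin 3 → MvPolynomial (Fin 2) F)
    -- `G l r` is the gcd of `P₁ - ζ^l P₂` and `Q₁ - ζ^r Q₂`
    (hG1 : ∀ l r, G l r ∣ P₁ - C (ζ ^ (l : ℕ)) * P₂)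
    (hG2 : ∀ l r, G l r ∣ Q₁ - C (ζ ^ (r : ℕ)) * Q₂)
    (hGmax : ∀ l r d, d ∣ P₁ - C (ζ ^ (l : ℕ)) * P₂ → d ∣ Q₁ - C (ζ ^ (r : ℕ)) * Q₂ →
      d ∣ G l r)
    (M : Fin 3 → Fin 3 → ℕ) (hM : ∀ l r, M l r = (G l r).totalDegree) :
    (∀ l, ∑ r, M l r = 2) ∧ (∀ r, ∑ l, M l r = 2) :=
  stmt_4_general ζ hζ P₁ Q₁ P₂ Q₂ hP₁ hQ₁ hP₂ hQ₂ hcop2 heq hPne hQne G hG1 hG2 hGmax M hM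
end

section
/- Let ζ = e^{2πi/6} and let H_144 be the 4×4 Hermitian matrix over ℤ[ζ] with diagonal entries 6, entries H_{i,i+1} = 2ζ-4 and H_{i+1,i} = -2ζ-2 for i = 1,2,3, and all other entries 0. Then H_144 is positive definite and det(H_144) = 144. -/
/-!
Write `a = 2ζ - 4`. Since `ζ = 1/2 + (√3/2) i`, we have `conj a = -2ζ - 2` and `|a|² = 12`, so `H`
is the Hermitian tridiagonal matrix with diagonal `6` and off-diagonal `a`. Symmetric Gaussian
elimination factors such a matrix as `Uᴴ D U` with `U` unit upper bidiagonal and `D` diagonal, the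
pivots obeying `p₀ = 6`, `pₖ₊₁ = 6 - |a|² / pₖ`; here they are `6, 4, 3, 2`. All pivots are positive,
so `H` is positive definite, and `det H = 6 · 4 · 3 · 2 = 144`.
-/

open Complex Matrix ComplexOrder

namespace Matrix

def hermitianTridiagonal4 (d : ℝ) (a : ℂ) : Matrix (Fin 4) (Fin 4) ℂ :=
  !![d, a, 0, 0; star a, d, a, 0; 0, star a, d, a; 0, 0, star a, d]

noncomputable def unitUpperBidiagonal4 (a : ℂ) (p : Fin 4 → ℝ) : Matrix (Fin 4) (Fin 4) ℂ :=
  !![1, a / p 0, 0, 0; 0, 1, a / p 1, 0; 0, 0, 1, a / p 2; 0, 0, 0, 1]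

lemma det_unitUpperBidiagonal4 (a : ℂ) (p : Fin 4 → ℝ) : (unitUpperBidiagonal4 a p).det = 1 := by
  rw [det_of_isUpperTriangular]
  · simp [unitUpperBidiagonal4, Fin.prod_univ_four]
  · intro i j hij
    fin_cases i <;> fin_cases j <;> simp_all [unitUpperBidiagonal4]

section LDL

open ComplexConjugate

variable {d : ℝ} {a : ℂ} {p : Fin 4 → ℝ}

theorem hermitianTridiagonal4_eq_conjTranspose_mul_diagonal_mul (hp₀ : p 0 = d)
    (hp : ∀ i : Fin 3, p i.succ = d - normSq a / p i.castSucc)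
    (hne : ∀ i : Fin 3, p i.castSucc ≠ 0) :
    hermitianTridiagonal4 d a =
      (unitUpperBidiagonal4 a p)ᴴ * diagonal (fun i ↦ (p i : ℂ)) * unitUpperBidiagonal4 a p := by
  have pivot (i : Fin 3) :
      (p i.succ : ℂ) * p i.castSucc = d * p i.castSucc - conj a * a := by
    rw [hp i, ← normSq_eq_conj_mul_self]
    push_cast
    field_simp [ofReal_ne_zero.mpr (hne i)]
  have pivot₀ : (p 1 : ℂ) * p 0 = d * p 0 - conj a * a := pivot 0
  have pivot₁ : (p 2 : ℂ) * p 1 = d * p 1 - conj a * a := pivot 1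
  have pivot₂ : (p 3 : ℂ) * p 2 = d * p 2 - conj a * a := pivot 2
  have n₀ : (p 0 : ℂ) ≠ 0 := ofReal_ne_zero.mpr (hne 0)
  have n₁ : (p 1 : ℂ) ≠ 0 := ofReal_ne_zero.mpr (hne 1)
  have n₂ : (p 2 : ℂ) ≠ 0 := ofReal_ne_zero.mpr (hne 2)
  ext i j
  fin_cases i <;> fin_cases j <;>
    simp [hermitianTridiagonal4, unitUpperBidiagonal4, mul_apply, Fin.sum_univ_four]
  · exact hp₀.symm
  all_goals field_simp
  · linear_combination -pivot₀
  · linear_combination -pivot₁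
  · linear_combination -pivot₂

theorem det_hermitianTridiagonal4 (hp₀ : p 0 = d)
    (hp : ∀ i : Fin 3, p i.succ = d - normSq a / p i.castSucc)
    (hne : ∀ i : Fin 3, p i.castSucc ≠ 0) :
    (hermitianTridiagonal4 d a).det = ∏ i, (p i : ℂ) := by
  rw [hermitianTridiagonal4_eq_conjTranspose_mul_diagonal_mul hp₀ hp hne, det_mul, det_mul,
    det_conjTranspose, det_unitUpperBidiagonal4, det_diagonal, star_one, one_mul, mul_one]

theorem posDef_hermitianTridiagonal4 (hp₀ : p 0 = d)
    (hp : ∀ i : Fin 3, p i.succ = d - normSq a / p i.castSucc)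
    (hpos : ∀ i, 0 < p i) :
    (hermitianTridiagonal4 d a).PosDef := by
  rw [hermitianTridiagonal4_eq_conjTranspose_mul_diagonal_mul hp₀ hp fun i ↦ (hpos _).ne']
  refine PosDef.conjTranspose_mul_mul_same ?_ ?_
  · exact posDef_diagonal_iff.mpr fun i ↦ by exact_mod_cast hpos i
  · refine mulVec_injective_iff_isUnit.mpr <| (isUnit_iff_isUnit_det _).mpr ?_
    simp [det_unitUpperBidiagonal4]

end LDL

end Matrix

theorem Complex.exp_two_pi_mul_I_div_six :
    exp (2 * Real.pi * I / 6) = (1 / 2 : ℝ) + (√3 / 2 : ℝ) * I := by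
  rw [show 2 * (Real.pi : ℂ) * I / 6 = (Real.pi / 3 : ℝ) * I by push_cast; ring, exp_mul_I,
    ← ofReal_cos, ← ofReal_sin, Real.cos_pi_div_three, Real.sin_pi_div_three]

/-- With `ζ = e^{2πi/6}`, the matrix `H₁₄₄` (diagonal 6, super-diagonal `2ζ-4`,
sub-diagonal `-2ζ-2`, zero elsewhere) is positive definite with determinant 144. -/
theorem stmt_11 (ζ : ℂ) (hζ : ζ = Complex.exp (2 * Real.pi * Complex.I / 6))
    (H : Matrix (Fin 4) (Fin 4) ℂ)
    (hH : H = !![6, 2*ζ - 4, 0, 0;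
                 -2*ζ - 2, 6, 2*ζ - 4, 0;
                 0, -2*ζ - 2, 6, 2*ζ - 4;
                 0, 0, -2*ζ - 2, 6]) :
    H.PosDef ∧ H.det = 144 := by
  rw [exp_two_pi_mul_I_div_six] at hζ
  have hstar : star (2 * ζ - 4) = -2 * ζ - 2 := by
    apply Complex.ext <;> simp [hζ]
    ring
  have hnormSq : normSq (2 * ζ - 4) = 12 := by
    norm_num [hζ, normSq_apply, ← pow_two, mul_pow, div_pow]
  have hH' : H = hermitianTridiagonal4 6 (2 * ζ - 4) := by
    rw [hH, hermitianTridiagonal4, hstar]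
    norm_num
  have hp (i : Fin 3) :
      ![6, 4, 3, 2] i.succ = 6 - normSq (2 * ζ - 4) / ![6, 4, 3, 2] i.castSucc := by
    rw [hnormSq]
    fin_cases i <;> simp [cons_val_two, vecHead, vecTail] <;> norm_num
  have hpos (i : Fin 4) : 0 < ![(6 : ℝ), 4, 3, 2] i := by
    fin_cases i <;> simp [cons_val_two, vecHead, vecTail]
  refine ⟨hH' ▸ posDef_hermitianTridiagonal4 (d := 6) rfl hp hpos, ?_⟩
  rw [hH', det_hermitianTridiagonal4 (d := 6) rfl hp fun i ↦ (hpos _).ne']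
  simp [Fin.prod_univ_four, cons_val_two, vecHead, vecTail]
  norm_num
end

section
/- Let ζ = e^{2πi/6} and let H_144 be the 4×4 Hermitian matrix over ℤ[ζ] defined as: diagonal entries 6, H_{i,i+1} = 2ζ-4, H_{i+1,i} = -2ζ-2 for i = 1,2,3, zero elsewhere. Then there is no nonzero vector v ∈ ℤ[ζ]^4 with v* H_144 v < 6, i.e., the minimal nonzero value of the form is 6. -/
open Complex Matrix ComplexConjugate

/-!
Writing the coordinates of `v ∈ ℤ[ζ]^4` as `v i = a i + b i ζ`, the relations `ζ² = ζ - 1` and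
`conj ζ = 1 - ζ` turn `v* H v` into `6 Q(a, b)` for an integral quadratic form `Q` in eight
variables. An explicit sum-of-squares decomposition of `24 Q` shows that `Q` is positive
definite, so `Q ≥ 1` on nonzero integer vectors, with equality at a basis vector.
-/

theorem exp_two_pi_I_div_six :
    exp (2 * Real.pi * I / 6) = (1 + √3 * I) / 2 := by
  have h : (2 * Real.pi * I / 6 : ℂ) = ((Real.pi / 3 : ℝ) : ℂ) * I := by push_cast; ring
  rw [h, exp_mul_I, ← ofReal_cos, ← ofReal_sin, Real.cos_pi_div_three, Real.sin_pi_div_three]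
  push_cast
  ring

theorem exp_two_pi_I_div_six_sq :
    exp (2 * Real.pi * I / 6) ^ 2 = exp (2 * Real.pi * I / 6) - 1 := by
  have h3 : ((√3 : ℝ) : ℂ) ^ 2 = 3 := by norm_cast; simp
  rw [exp_two_pi_I_div_six]
  linear_combination ((√3 : ℂ) ^ 2 / 4) * I_sq - (1 / 4) * h3

theorem conj_exp_two_pi_I_div_six :
    conj (exp (2 * Real.pi * I / 6)) = 1 - exp (2 * Real.pi * I / 6) := by
  rw [exp_two_pi_I_div_six]
  simp only [map_div₀, map_add, map_one, map_mul, conj_ofReal, conj_I, map_ofNat]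
  ring

/-- Half the norm form of `E₈` in the coordinates `v i = a i + b i ζ`. -/
def e8Form (a b : Fin 4 → ℤ) : ℤ :=
  ∑ i, (a i ^ 2 + a i * b i + b i ^ 2) -
    ∑ i : Fin 3, (a i.castSucc * a i.succ + b i.castSucc * b i.succ + a i.castSucc * b i.succ)

/-- The `LDLᵀ` decomposition of the Gram matrix of `e8Form`, with denominators cleared. -/
theorem e8Form_sum_sq (a b : Fin 4 → ℤ) :
    24 * e8Form a b =
      6 * (2 * a 0 + b 0 - a 1 - b 1) ^ 2 + 2 * (3 * b 0 + a 1 - b 1) ^ 2 +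
      (4 * a 1 + 2 * b 1 - 3 * a 2 - 3 * b 2) ^ 2 + 3 * (2 * b 1 + a 2 - b 2) ^ 2 +
      3 * (2 * a 2 + b 2 - 2 * a 3 - 2 * b 3) ^ 2 + (3 * b 2 + 2 * a 3 - 2 * b 3) ^ 2 +
      2 * (2 * a 3 + b 3) ^ 2 + 6 * b 3 ^ 2 := by
  simp only [e8Form, Fin.sum_univ_four, Fin.sum_univ_three, Fin.isValue, Fin.castSucc_zero,
    Fin.succ_zero_eq_one, Fin.castSucc_one, Fin.succ_one_eq_two, Fin.reduceCastSucc, Fin.reduceSucc]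
  ring

theorem eq_zero_of_e8Form_nonpos {a b : Fin 4 → ℤ} (h : e8Form a b ≤ 0) : a = 0 ∧ b = 0 := by
  have hsum := e8Form_sum_sq a b
  have h0 := (sq_nonpos_iff (2 * a 0 + b 0 - a 1 - b 1)).mp (by nlinarith)
  have h1 := (sq_nonpos_iff (3 * b 0 + a 1 - b 1)).mp (by nlinarith)
  have h2 := (sq_nonpos_iff (4 * a 1 + 2 * b 1 - 3 * a 2 - 3 * b 2)).mp (by nlinarith)
  have h3 := (sq_nonpos_iff (2 * b 1 + a 2 - b 2)).mp (by nlinarith)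
  have h4 := (sq_nonpos_iff (2 * a 2 + b 2 - 2 * a 3 - 2 * b 3)).mp (by nlinarith)
  have h5 := (sq_nonpos_iff (3 * b 2 + 2 * a 3 - 2 * b 3)).mp (by nlinarith)
  have h6 := (sq_nonpos_iff (2 * a 3 + b 3)).mp (by nlinarith)
  have h7 := (sq_nonpos_iff (b 3)).mp (by nlinarith)
  constructor <;> funext i <;> fin_cases i <;> simp <;> omega

section Eisenstein

variable {ζ : ℂ}

theorem conj_mul_self_eisenstein (hsq : ζ ^ 2 = ζ - 1) (hconj : conj ζ = 1 - ζ) (a b : ℤ) :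
    conj (a + b * ζ) * (a + b * ζ) = (a : ℂ) ^ 2 + a * b + b ^ 2 := by
  simp only [map_add, map_mul, map_intCast, hconj]
  linear_combination (-(b : ℂ) ^ 2) * hsq

theorem eisenstein_coupling (hsq : ζ ^ 2 = ζ - 1) (hconj : conj ζ = 1 - ζ) (a b c d : ℤ) :
    conj (a + b * ζ) * (2 * ζ - 4) * (c + d * ζ) + conj (c + d * ζ) * (-2 * ζ - 2) * (a + b * ζ) =
      -6 * ((a : ℂ) * c + b * d + a * d) := by
  simp only [map_add, map_mul, map_intCast, hconj]
  linear_combination (4 * (a : ℂ) * d - 4 * b * c + 6 * b * d) * hsq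

def H144 (ζ : ℂ) : Matrix (Fin 4) (Fin 4) ℂ :=
  !![6, 2 * ζ - 4, 0, 0;
     -2 * ζ - 2, 6, 2 * ζ - 4, 0;
     0, -2 * ζ - 2, 6, 2 * ζ - 4;
     0, 0, -2 * ζ - 2, 6]

theorem sum_conj_mul_H144_mul (hsq : ζ ^ 2 = ζ - 1) (hconj : conj ζ = 1 - ζ)
    {v : Fin 4 → ℂ} {a b : Fin 4 → ℤ} (hv : ∀ i, v i = a i + b i * ζ) :
    ∑ i, ∑ j, conj (v i) * H144 ζ i j * v j = ((6 * e8Form a b : ℤ) : ℂ) := by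
  have hnorm i := conj_mul_self_eisenstein hsq hconj (a i) (b i)
  have hcoupling i j := eisenstein_coupling hsq hconj (a i) (b i) (a j) (b j)
  simp only [hv, H144, e8Form, of_apply, cons_val', cons_val_fin_one, Fin.sum_univ_four,
    Fin.sum_univ_three, Fin.isValue, cons_val_zero, cons_val_one, cons_val, mul_zero, zero_mul,
    add_zero, zero_add, Fin.castSucc_zero, Fin.succ_zero_eq_one, Fin.castSucc_one,
    Fin.succ_one_eq_two, Fin.reduceCastSucc, Fin.reduceSucc, Int.cast_mul, Int.cast_ofNat,
    Int.cast_sub, Int.cast_add, Int.cast_pow]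
  linear_combination
    6 * (hnorm 0 + hnorm 1 + hnorm 2 + hnorm 3) + hcoupling 0 1 + hcoupling 1 2 + hcoupling 2 3

end Eisenstein

/-- With `ζ = e^{2πi/6}` and `H₁₄₄` as above, there is no nonzero vector
`v ∈ ℤ[ζ]^4` with `v* H v < 6`; the minimal nonzero value of the form is 6. -/
theorem stmt_12 (ζ : ℂ) (hζ : ζ = Complex.exp (2 * Real.pi * Complex.I / 6))
    (H : Matrix (Fin 4) (Fin 4) ℂ)
    (hH : H = !![6, 2*ζ - 4, 0, 0;
                 -2*ζ - 2, 6, 2*ζ - 4, 0;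
                 0, -2*ζ - 2, 6, 2*ζ - 4;
                 0, 0, -2*ζ - 2, 6]) :
    (∀ v : Fin 4 → ℂ, (∀ i, ∃ a b : ℤ, v i = a + b * ζ) → v ≠ 0 →
      ¬ (∑ i, ∑ j, (starRingEnd ℂ) (v i) * H i j * v j).re < 6) ∧
    (∃ v : Fin 4 → ℂ, (∀ i, ∃ a b : ℤ, v i = a + b * ζ) ∧ v ≠ 0 ∧
      (∑ i, ∑ j, (starRingEnd ℂ) (v i) * H i j * v j) = 6) := by
  have hsq : ζ ^ 2 = ζ - 1 := hζ ▸ exp_two_pi_I_div_six_sq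
  have hconj : conj ζ = 1 - ζ := hζ ▸ conj_exp_two_pi_I_div_six
  have hform {v : Fin 4 → ℂ} {a b : Fin 4 → ℤ} (hv : ∀ i, v i = a i + b i * ζ) :
      ∑ i, ∑ j, conj (v i) * H i j * v j = ((6 * e8Form a b : ℤ) : ℂ) :=
    hH ▸ sum_conj_mul_H144_mul hsq hconj hv
  have hbasis (i : Fin 4) :
      (Pi.single 0 1 : Fin 4 → ℂ) i = (Pi.single 0 1 : Fin 4 → ℤ) i + (0 : Fin 4 → ℤ) i * ζ := by
    fin_cases i <;> simp
  refine ⟨fun v hv hne hlt => ?_, Pi.single 0 1, fun i => ⟨_, _, hbasis i⟩,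
    Pi.single_ne_zero_iff.mpr one_ne_zero, ?_⟩
  · choose a b hab using hv
    rw [hform hab, intCast_re] at hlt
    have hnonpos : e8Form a b ≤ 0 := by
      have : (6 * e8Form a b : ℤ) < 6 := by exact_mod_cast hlt
      omega
    obtain ⟨rfl, rfl⟩ := eq_zero_of_e8Form_nonpos hnonpos
    exact hne (funext fun i => by simp [hab])
  · rw [hform hbasis]
    simp [e8Form, Fin.sum_univ_four]
end

section
/- Let F be an algebraically closed field with char F ∤ 3 containing a primitive cube root of unity ζ, let x_1, y_1, x_2, y_2 ∈ F satisfy x_i ≠ y_i for i=1,2 and x_2 y_1 - x_1 y_2 ≠ 0, and let G_{1,2}, G_{2,1} ∈ F[u,v] be fixed coprime homogeneous linear forms. Then there exist unique homogeneous linear forms G_{1,1}, G_{2,2} given by (2ζ+1)(x_2y_1 - x_1y_2) G_{1,1} = (x_1-y_1)(ζ²x_2 - ζy_2) G_{1,2} - (x_2-y_2)(ζ²x_1 - ζy_1) G_{2,1} and (2ζ+1)(x_2y_1 - x_1y_2) G_{2,2} = (x_2-y_2)(ζx_1 - ζ²y_1) G_{1,2} - (x_1-y_1)(ζx_2 - ζ²y_2)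 G_{2,1}, such that defining G_{0,0} by (x_1-y_1)G_{0,0} = -(ζx_1 - ζ²y_1)G_{1,1}G_{1,2} - (ζ²x_1 - ζy_1)G_{2,1}G_{2,2}, the two equations (x_1-y_1)G_{0,0} + (ζx_1-ζ²y_1)G_{1,1}G_{1,2} + (ζ²x_1-ζy_1)G_{2,1}G_{2,2} = 0 and (x_2-y_2)G_{0,0} + (ζx_2-ζ²y_2)G_{1,1}G_{2,1} + (ζ²x_2-ζy_2)G_{1,2}G_{2,2} = 0 both hold. -/
open MvPolynomial

private lemma aux_elim {R : Type*} [CommRing R]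
    (a b c q₁ q₁' q₂ q₂' g₁₂ g₂₁ p₁ p₂ g₀₀ : R)
    (h3 : c * p₁ = a * q₂' * g₁₂ - b * q₁' * g₂₁)
    (h4 : c * p₂ = b * q₁ * g₁₂ - a * q₂ * g₂₁)
    (h0 : a * g₀₀ = -(q₁ * (p₁ * g₁₂)) - q₁' * (g₂₁ * p₂)) :
    a * c * (b * g₀₀ + q₂ * (p₁ * g₂₁) + q₂' * (g₁₂ * p₂)) = 0 := by
  linear_combination (b * c) * h0 + (q₂ * a * g₂₁ - q₁ * b * g₁₂) * h3
    + (q₂' * a * g₁₂ - q₁' * b * g₂₁) * h4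

/-- Explicit elimination parametrizing `H₃`-curves: given coprime linear forms
`G₁₂, G₂₁`, there exist unique linear forms `G₁₁, G₂₂` satisfying the displayed
formulas, and for the `G₀₀` defined by its formula both main equations hold. -/
theorem stmt_17 {F : Type*} [Field F] [IsAlgClosed F] (hchar : (3 : F) ≠ 0)
    (ζ : F) (hζ : IsPrimitiveRoot ζ 3)
    (x₁ y₁ x₂ y₂ : F) (h1 : x₁ ≠ y₁) (h2 : x₂ ≠ y₂) (hd : x₂ * y₁ - x₁ * y₂ ≠ 0)
    (G₁₂ G₂₁ : MvPolynomial (Fin 2) F)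
    (hG₁₂ : G₁₂.IsHomogeneous 1) (hG₂₁ : G₂₁.IsHomogeneous 1)
    (hcop : ∀ d, d ∣ G₁₂ → d ∣ G₂₁ → IsUnit d) :
    ∃! p : MvPolynomial (Fin 2) F × MvPolynomial (Fin 2) F,
      p.1.IsHomogeneous 1 ∧ p.2.IsHomogeneous 1 ∧
      C ((2 * ζ + 1) * (x₂ * y₁ - x₁ * y₂)) * p.1 =
        C ((x₁ - y₁) * (ζ ^ 2 * x₂ - ζ * y₂)) * G₁₂
          - C ((x₂ - y₂) * (ζ ^ 2 * x₁ - ζ * y₁)) * G₂₁ ∧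
      C ((2 * ζ + 1) * (x₂ * y₁ - x₁ * y₂)) * p.2 =
        C ((x₂ - y₂) * (ζ * x₁ - ζ ^ 2 * y₁)) * G₁₂
          - C ((x₁ - y₁) * (ζ * x₂ - ζ ^ 2 * y₂)) * G₂₁ ∧
      ∀ G₀₀ : MvPolynomial (Fin 2) F,
        C (x₁ - y₁) * G₀₀ =
          -(C (ζ * x₁ - ζ ^ 2 * y₁) * (p.1 * G₁₂)) - C (ζ ^ 2 * x₁ - ζ * y₁) * (G₂₁ * p.2) →
        (C (x₁ - y₁) * G₀₀ + C (ζ * x₁ - ζ ^ 2 * y₁) * (p.1 * G₁₂)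
            + C (ζ ^ 2 * x₁ - ζ * y₁) * (G₂₁ * p.2) = 0 ∧
         C (x₂ - y₂) * G₀₀ + C (ζ * x₂ - ζ ^ 2 * y₂) * (p.1 * G₂₁)
            + C (ζ ^ 2 * x₂ - ζ * y₂) * (G₁₂ * p.2) = 0) := by
  -- ζ² + ζ + 1 = 0 and 2ζ + 1 ≠ 0
  have hζ3 : ζ ^ 3 = 1 := hζ.pow_eq_one
  have hζ1 : ζ ≠ 1 := hζ.ne_one (by norm_num)
  have hsum : ζ ^ 2 + ζ + 1 = 0 := by
    have hmul : (ζ - 1) * (ζ ^ 2 + ζ + 1) = 0 := by linear_combination hζ3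
    exact (mul_eq_zero.mp hmul).resolve_left (sub_ne_zero.mpr hζ1)
  have h2ζ : 2 * ζ + 1 ≠ 0 := fun h => hchar (by linear_combination 4 * hsum - (2 * ζ + 1) * h)
  set c : F := (2 * ζ + 1) * (x₂ * y₁ - x₁ * y₂) with hc_def
  have hc : c ≠ 0 := mul_ne_zero h2ζ hd
  have hCc : (C c : MvPolynomial (Fin 2) F) ≠ 0 := by
    simpa using hc
  set R₁ : MvPolynomial (Fin 2) F :=
    C ((x₁ - y₁) * (ζ ^ 2 * x₂ - ζ * y₂)) * G₁₂ - C ((x₂ - y₂) * (ζ ^ 2 * x₁ - ζ * y₁)) * G₂₁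
    with hR₁_def
  set R₂ : MvPolynomial (Fin 2) F :=
    C ((x₂ - y₂) * (ζ * x₁ - ζ ^ 2 * y₁)) * G₁₂ - C ((x₁ - y₁) * (ζ * x₂ - ζ ^ 2 * y₂)) * G₂₁
    with hR₂_def
  have hCmul : ∀ (r : F) (G : MvPolynomial (Fin 2) F), G.IsHomogeneous 1 →
      (C r * G).IsHomogeneous 1 := by
    intro r G hG
    have := (isHomogeneous_C (Fin 2) r).mul hG
    rwa [zero_add] at this
  have hR₁hom : R₁.IsHomogeneous 1 :=
    MvPolynomial.IsHomogeneous.sub (hCmul _ _ hG₁₂) (hCmul _ _ hG₂₁)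
  have hR₂hom : R₂.IsHomogeneous 1 :=
    MvPolynomial.IsHomogeneous.sub (hCmul _ _ hG₁₂) (hCmul _ _ hG₂₁)
  refine ⟨(C c⁻¹ * R₁, C c⁻¹ * R₂), ⟨?_, ?_, ?_, ?_, ?_⟩, ?_⟩
  · exact hCmul _ _ hR₁hom
  · exact hCmul _ _ hR₂hom
  · rw [← mul_assoc, ← C_mul, mul_inv_cancel₀ hc, C_1, one_mul]
  · rw [← mul_assoc, ← C_mul, mul_inv_cancel₀ hc, C_1, one_mul]
  · intro G₀₀ hG00
    have heq3 : C c * (C c⁻¹ * R₁) = R₁ := by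
      rw [← mul_assoc, ← C_mul, mul_inv_cancel₀ hc, C_1, one_mul]
    have heq4 : C c * (C c⁻¹ * R₂) = R₂ := by
      rw [← mul_assoc, ← C_mul, mul_inv_cancel₀ hc, C_1, one_mul]
    constructor
    · linear_combination hG00
    · have key := aux_elim (C (x₁ - y₁)) (C (x₂ - y₂)) (C c)
        (C (ζ * x₁ - ζ ^ 2 * y₁)) (C (ζ ^ 2 * x₁ - ζ * y₁))
        (C (ζ * x₂ - ζ ^ 2 * y₂)) (C (ζ ^ 2 * x₂ - ζ * y₂))
        G₁₂ G₂₁ (C c⁻¹ * R₁) (C c⁻¹ * R₂) G₀₀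
        (by rw [heq3, hR₁_def, map_mul, map_mul])
        (by rw [heq4, hR₂_def, map_mul, map_mul])
        hG00
      have hne : (C (x₁ - y₁) * C c : MvPolynomial (Fin 2) F) ≠ 0 :=
        mul_ne_zero (by rw [Ne, C_eq_zero]; exact sub_ne_zero.mpr h1) hCc
      have := mul_eq_zero.mp (by rw [← mul_assoc] at key; exact key)
      linear_combination this.resolve_left hne
  · rintro ⟨q₁, q₂⟩ ⟨-, -, hq3, hq4, -⟩
    have e1 : C c * q₁ = C c * (C c⁻¹ * R₁) := by
      rw [← mul_assoc, ← C_mul, mul_inv_cancel₀ hc, C_1, one_mul]; exact hq3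
    have e2 : C c * q₂ = C c * (C c⁻¹ * R₂) := by
      rw [← mul_assoc, ← C_mul, mul_inv_cancel₀ hc, C_1, one_mul]; exact hq4
    exact Prod.ext (mul_left_cancel₀ hCc e1) (mul_left_cancel₀ hCc e2)
end
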